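/- arXiv:2006.15575 — 2 statements merged into one kernel-verified Lean document; each statement's English description precedes it below -/
import Mathlib

section
/- Let P be a Δ × b matrix of natural numbers (b columns), where each column is non-decreasing from bottom to top and adjacent entries in any row differ by at most 1. Partition the rows into maximal groups of consecutive rows ('row groups') such that two adjacent rows are in the same group iff their leftmost entries differ by at most b. Then: (i) any two entries within the same row group and the same column group of Δ consecutive columns, in adjacent rows, differ by at most 2b; (ii) any two entries lying in non-adjacent row groups differ by more than b. -/
private lemma fin_telescope {N : ℕ} (g : Fin N → ℤ)
    (h : ∀ k k' : Fin N, (k' : ℕ) = (k : ℕ) + 1 → (g k' - g k).natAbs ≤ 1) :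
    ∀ (n : ℕ) (j j' : Fin N), (j' : ℕ) = (j : ℕ) + n → (g j' - g j).natAbs ≤ n := by
  intro n
  induction n with
  | zero =>
    intro j j' hjj
    have : j' = j := Fin.ext (by omega)
    simp [this]
  | succ n ih =>
    intro j j' hjj
    have hlt : (j : ℕ) + n < N := by have := j'.isLt; omega
    have h1 : (g ⟨(j : ℕ) + n, hlt⟩ - g j).natAbs ≤ n := ih j _ rfl
    have h2 : (g j' - g ⟨(j : ℕ) + n, hlt⟩).natAbs ≤ 1 :=
      h ⟨(j : ℕ) + n, hlt⟩ j' (show (j' : ℕ) = (j : ℕ) + n + 1 by omega)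
    have he : g j' - g j = (g j' - g ⟨(j : ℕ) + n, hlt⟩) + (g ⟨(j : ℕ) + n, hlt⟩ - g j) := by
      ring
    calc (g j' - g j).natAbs
        = ((g j' - g ⟨(j : ℕ) + n, hlt⟩) + (g ⟨(j : ℕ) + n, hlt⟩ - g j)).natAbs := by rw [he]
      _ ≤ (g j' - g ⟨(j : ℕ) + n, hlt⟩).natAbs + (g ⟨(j : ℕ) + n, hlt⟩ - g j).natAbs :=
          Int.natAbs_add_le _ _
      _ ≤ n + 1 := by omega

/-- For a `Δ × b` prefix-sum matrix (columns non-decreasing bottom-to-top, at most one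
`±1` update per column) with rows partitioned into row groups (adjacent rows are in the
same group iff their leftmost entries differ by at most `b`):
(i) adjacent rows in the same row group have entries (in each column) differing by at
most `2b`; (ii) entries in non-adjacent row groups differ by more than `b`. -/
theorem stmt4 (Δ b : ℕ) (hb : 0 < b) (P : Fin b → Fin Δ → ℕ) (grp : Fin Δ → ℕ)
    (hcol : ∀ (i : Fin b) (j j' : Fin Δ), j ≤ j' → P i j ≤ P i j')
    (hadj : ∀ (i i' : Fin b) (j : Fin Δ), (i' : ℕ) = (i : ℕ) + 1 →
      ((P i' j : ℤ) - (P i j : ℤ)).natAbs ≤ 1)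
    (hdiff : ∀ (i i' : Fin b) (j j' : Fin Δ), (i' : ℕ) = (i : ℕ) + 1 → j ≤ j' →
      (((P i' j' : ℤ) - (P i' j : ℤ)) - ((P i j' : ℤ) - (P i j : ℤ))).natAbs ≤ 1)
    (hgrpdef : ∀ (j j' : Fin Δ), (j' : ℕ) = (j : ℕ) + 1 →
      (grp j' = grp j ↔ P ⟨0, hb⟩ j' ≤ P ⟨0, hb⟩ j + b))
    (hgrpstep : ∀ (j j' : Fin Δ), (j' : ℕ) = (j : ℕ) + 1 →
      grp j' = grp j ∨ grp j' = grp j + 1) :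
    (∀ (i : Fin b) (j j' : Fin Δ), (j' : ℕ) = (j : ℕ) + 1 → grp j' = grp j →
      ((P i j' : ℤ) - (P i j : ℤ)).natAbs ≤ 2 * b) ∧
    (∀ (i i' : Fin b) (j j' : Fin Δ), grp j + 1 < grp j' →
      (P i j : ℤ) + b < (P i' j' : ℤ)) := by
  -- column-telescoped version of hadj:
  have colA : ∀ (j : Fin Δ) (c c' : Fin b), (c : ℕ) ≤ (c' : ℕ) →
      ((P c' j : ℤ) - (P c j : ℤ)).natAbs ≤ (c' : ℕ) - (c : ℕ) := by
    intro j c c' hcc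
    exact fin_telescope (fun k => (P k j : ℤ)) (fun k k' hk => hadj k k' j hk)
      ((c' : ℕ) - (c : ℕ)) c c' (by omega)
  -- column-telescoped version of hdiff (relative to column 0):
  have colB : ∀ (j j' : Fin Δ), j ≤ j' → ∀ (i : Fin b),
      (((P i j' : ℤ) - (P i j : ℤ)) - ((P ⟨0, hb⟩ j' : ℤ) - (P ⟨0, hb⟩ j : ℤ))).natAbs
        ≤ (i : ℕ) := by
    intro j j' hjj i
    exact fin_telescope (fun k => (P k j' : ℤ) - (P k j : ℤ))
      (fun k k' hk => hdiff k k' j j' hk hjj) (i : ℕ) ⟨0, hb⟩ i (by simp)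
  -- grp is monotone and P 0 grows by at least b+1 per group increment:
  have growth : ∀ (n : ℕ) (j j' : Fin Δ), (j' : ℕ) = (j : ℕ) + n →
      grp j ≤ grp j' ∧ P ⟨0, hb⟩ j + (grp j' - grp j) * (b + 1) ≤ P ⟨0, hb⟩ j' := by
    intro n
    induction n with
    | zero =>
      intro j j' hjj
      have : j' = j := Fin.ext (by omega)
      simp [this]
    | succ n ih =>
      intro j j' hjj
      have hlt : (j : ℕ) + n < Δ := by have := j'.isLt; omega
      set k : Fin Δ := ⟨(j : ℕ) + n, hlt⟩ with hkdef
      obtain ⟨hm, hg⟩ := ih j k rfl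
      have hstepval : (j' : ℕ) = (k : ℕ) + 1 := by simp [hkdef]; omega
      have hmono : P ⟨0, hb⟩ k ≤ P ⟨0, hb⟩ j' := by
        apply hcol
        exact Fin.le_def.mpr (by omega)
      rcases hgrpstep k j' hstepval with heq | hsucc
      · exact ⟨by omega, by rw [heq]; omega⟩
      · have hne : grp j' ≠ grp k := by omega
        have : ¬ (P ⟨0, hb⟩ j' ≤ P ⟨0, hb⟩ k + b) := by
          intro hle
          exact hne ((hgrpdef k j' hstepval).mpr hle)
        have hjump : P ⟨0, hb⟩ k + b + 1 ≤ P ⟨0, hb⟩ j' := by omega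
        constructor
        · omega
        · have : grp j' - grp j = (grp k - grp j) + 1 := by omega
          rw [this]
          nlinarith [hg, hjump]
  constructor
  · -- part (i)
    intro i j j' hjj hgeq
    have hle : j ≤ j' := Fin.le_def.mpr (by omega)
    have h1 : P ⟨0, hb⟩ j' ≤ P ⟨0, hb⟩ j + b := (hgrpdef j j' hjj).mp hgeq
    have h2 : P ⟨0, hb⟩ j ≤ P ⟨0, hb⟩ j' := hcol _ j j' hle
    have h3 : P i j ≤ P i j' := hcol i j j' hle
    have h4 := colB j j' hle i
    have hib : (i : ℕ) < b := i.isLt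
    omega
  · -- part (ii)
    intro i i' j j' hgg
    -- first, j ≤ j'
    have hle : j ≤ j' := by
      rcases le_total j j' with h | h
      · exact h
      · exfalso
        have := (growth ((j : ℕ) - (j' : ℕ)) j' j (by
          have := Fin.le_def.mp h; omega)).1
        omega
    obtain ⟨hm, hg⟩ := growth ((j' : ℕ) - (j : ℕ)) j j' (by
      have := Fin.le_def.mp hle; omega)
    -- P 0 j' ≥ P 0 j + 2*(b+1)
    have hgrow : P ⟨0, hb⟩ j + 2 * (b + 1) ≤ P ⟨0, hb⟩ j' := by
      have h2 : 2 ≤ grp j' - grp j := by omega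
      nlinarith [hg]
    -- work at column m = min i i'
    have hmlt : min (i : ℕ) (i' : ℕ) < b := by have := i.isLt; omega
    set m : Fin b := ⟨min (i : ℕ) (i' : ℕ), hmlt⟩ with hmdef
    have hA1 : ((P i j : ℤ) - (P m j : ℤ)).natAbs ≤ (i : ℕ) - (m : ℕ) := by
      have := colA j m i (by simp [hmdef])
      omega
    have hA2 : ((P i' j' : ℤ) - (P m j' : ℤ)).natAbs ≤ (i' : ℕ) - (m : ℕ) := by
      have := colA j' m i' (by simp [hmdef])
      omega
    have hB := colB j j' hle m
    have hmv : (m : ℕ) = min (i : ℕ) (i' : ℕ) := rfl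
    have hmin : (m : ℕ) = (i : ℕ) ∨ (m : ℕ) = (i' : ℕ) := by
      rw [hmv]; omega
    have hib : (i : ℕ) < b := i.isLt
    have hi'b : (i' : ℕ) < b := i'.isLt
    omega
end

section
/- Let L_v be a set of segments with distinct integer endpoint x-coordinates, partitioned into slabs, and let L_{v_k} be the segments of slab k with x-coordinates rank-reduced: a segment with endpoints (x₁, x₂) in L_v gets endpoints (2r₁ - 1, 2r₂ - 1) in L_{v_k}, where r_t = rank(E_v, x_t, k) and E_v[x] = k iff x is an endpoint x-coordinate of a slab-k segment (E_v[x] ≠ k otherwise). For a query time i, define i' = 2·rank(E_v, i, k) - 1 if E_v[i] = k, and i' = 2·rank(E_v, i, k) otherwise. Then the set of slab-k segments of L_v crossed by the vertical line at i equals (under the rank-reduction bijection) the set of segments of L_{v_k} crossed by the vertical line at i'. -/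
/-- `rankE E k x` counts the x-coordinates `x'' ≤ x` that carry an endpoint of a slab-`k`
segment (i.e. `E x'' = k`). -/
def rankE (E : ℕ → ℕ) (k x : ℕ) : ℕ :=
  ((Finset.Icc 1 x).filter (fun y => E y = k)).card

lemma rankE_mono (E : ℕ → ℕ) (k : ℕ) {x y : ℕ} (h : x ≤ y) : rankE E k x ≤ rankE E k y :=
  Finset.card_le_card (Finset.filter_subset_filter _ (Finset.Icc_subset_Icc_right h))

lemma rankE_pos (E : ℕ → ℕ) (k : ℕ) {x : ℕ} (hx : 1 ≤ x) (hE : E x = k) : 1 ≤ rankE E k x := by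
  have hm : x ∈ (Finset.Icc 1 x).filter (fun y => E y = k) := by
    simp [Finset.mem_filter, Finset.mem_Icc, hx, hE]
  exact Finset.card_pos.mpr ⟨x, hm⟩

lemma rankE_lt (E : ℕ → ℕ) (k : ℕ) {x y : ℕ} (hx : x < y) (hy : 1 ≤ y) (hE : E y = k) :
    rankE E k x < rankE E k y := by
  have hsub : insert y ((Finset.Icc 1 x).filter (fun z => E z = k)) ⊆
      (Finset.Icc 1 y).filter (fun z => E z = k) := by
    intro z hz
    rcases Finset.mem_insert.mp hz with rfl | hz
    · simp [Finset.mem_filter, Finset.mem_Icc, hy, hE]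
    · simp only [Finset.mem_filter, Finset.mem_Icc] at hz ⊢
      exact ⟨⟨hz.1.1, hz.1.2.trans hx.le⟩, hz.2⟩
  have hy' : y ∉ (Finset.Icc 1 x).filter (fun z => E z = k) := by
    simp only [Finset.mem_filter, Finset.mem_Icc]
    rintro ⟨⟨-, h2⟩, -⟩
    omega
  have := Finset.card_le_card hsub
  rw [Finset.card_insert_of_notMem hy'] at this
  unfold rankE
  omega

/-- Rank reduction preserves crossings (Lemma 4.2): a slab-`k` segment `(x₁, x₂)` is
crossed by the vertical line at `i` iff its rank-reduced copy
`(2·rank(x₁) - 1, 2·rank(x₂) - 1)` is crossed by the vertical line at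
`i' = 2·rank(i) - 1` (if `E i = k`) or `i' = 2·rank(i)` (otherwise). -/
theorem stmt18 (E : ℕ → ℕ) (k : ℕ) (segk : Finset (ℕ × ℕ))
    (hvalid : ∀ s ∈ segk, 1 ≤ s.1 ∧ s.1 ≤ s.2)
    (hend : ∀ x : ℕ, E x = k ↔ ∃ s ∈ segk, s.1 = x ∨ s.2 = x)
    (hdistinct : ∀ s ∈ segk, ∀ t ∈ segk,
      (s.1 = t.1 → s = t) ∧ (s.2 = t.2 → s = t) ∧ s.1 ≠ t.2)
    (i i' : ℕ) (hi : 1 ≤ i)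
    (hi' : i' = if E i = k then 2 * rankE E k i - 1 else 2 * rankE E k i) :
    ∀ s ∈ segk, (s.1 ≤ i ∧ i ≤ s.2) ↔
      (2 * rankE E k s.1 - 1 ≤ i' ∧ i' ≤ 2 * rankE E k s.2 - 1) := by
  intro s hs
  have hE1 : E s.1 = k := (hend s.1).mpr ⟨s, hs, Or.inl rfl⟩
  have hE2 : E s.2 = k := (hend s.2).mpr ⟨s, hs, Or.inr rfl⟩
  obtain ⟨h1, h12⟩ := hvalid s hs
  have h2 : 1 ≤ s.2 := h1.trans h12
  have ha : 1 ≤ rankE E k s.1 := rankE_pos E k h1 hE1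
  have hb : 1 ≤ rankE E k s.2 := rankE_pos E k h2 hE2
  by_cases hEi : E i = k
  · rw [hi', if_pos hEi]
    have hr : 1 ≤ rankE E k i := rankE_pos E k hi hEi
    constructor
    · rintro ⟨hl, hr'⟩
      have := rankE_mono E k hl
      have := rankE_mono E k hr'
      omega
    · rintro ⟨hl, hr'⟩
      constructor
      · by_contra h
        have := rankE_lt E k (by omega : i < s.1) h1 hE1
        omega
      · by_contra h
        have := rankE_lt E k (by omega : s.2 < i) hi hEi
        omega
  · rw [hi', if_neg hEi]
    have hne1 : s.1 ≠ i := fun h => hEi (h ▸ hE1)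
    have hne2 : s.2 ≠ i := fun h => hEi (h ▸ hE2)
    constructor
    · rintro ⟨hl, hr'⟩
      have hlt1 : s.1 < i := lt_of_le_of_ne hl hne1
      have hlt2 : i < s.2 := lt_of_le_of_ne hr' (Ne.symm hne2)
      have h1' := rankE_mono E k hl
      have h2' := rankE_lt E k hlt2 h2 hE2
      omega
    · rintro ⟨hl, hr'⟩
      constructor
      · by_contra h
        have := rankE_lt E k (by omega : i < s.1) h1 hE1
        omega
      · by_contra h
        have := rankE_mono E k (by omega : s.2 ≤ i)
        omega
end
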